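/- A commutative semiring K is positive if and only if for every finite non-empty universe A, every model-defining K-interpretation π : Lit_A → K, and every first-order sentence φ over 𝒱: 𝔄_π ⊨ φ implies π⟦φ⟧ ≠ 0. -/

import Mathlib

/-- A finite relational vocabulary: a type of relation symbols with arities. -/
structure Vocab : Type 1 where
  Rel : Type
  arity : Rel → ℕ

/-- First-order formulas over a relational vocabulary `𝒱` (with equality),
with variables from `Vars`.  Negated atoms are included as primitive literals. -/
inductive Formula (𝒱 : Vocab) (Vars : Type) : Type where
  | rel    : (R : 𝒱.Rel) → (Fin (𝒱.arity R) → Vars) → Formula 𝒱 Vars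
  | nrel   : (R : 𝒱.Rel) → (Fin (𝒱.arity R) → Vars) → Formula 𝒱 Vars
  | equal  : Vars → Vars → Formula 𝒱 Vars
  | nequal : Vars → Vars → Formula 𝒱 Vars
  | and    : Formula 𝒱 Vars → Formula 𝒱 Vars → Formula 𝒱 Vars
  | or     : Formula 𝒱 Vars → Formula 𝒱 Vars → Formula 𝒱 Vars
  | all    : Vars → Formula 𝒱 Vars → Formula 𝒱 Vars
  | ex     : Vars → Formula 𝒱 Vars → Formula 𝒱 Vars
  | not    : Formula 𝒱 Vars → Formula 𝒱 Vars

/-- A ground literal over vocabulary `𝒱` and universe `A`: a positive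
(`pos = true`) or negated (`pos = false`) ground atom `R(ā)`. -/
structure Lit (𝒱 : Vocab) (A : Type) where
  pos : Bool
  R : 𝒱.Rel
  args : Fin (𝒱.arity R) → A

/-- Negation of a literal (the negation of a literal is again a literal). -/
def Lit.neg {𝒱 : Vocab} {A : Type} (L : Lit 𝒱 A) : Lit 𝒱 A := ⟨!L.pos, L.R, L.args⟩

namespace Formula

variable {𝒱 : Vocab} {Vars : Type}

/-- Size of a formula (used for termination of the semiring semantics). -/
def size : Formula 𝒱 Vars → ℕ
  | rel _ _ => 1
  | nrel _ _ => 1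
  | equal _ _ => 1
  | nequal _ _ => 1
  | and φ ψ => φ.size + ψ.size + 1
  | or φ ψ => φ.size + ψ.size + 1
  | all _ φ => φ.size + 1
  | ex _ φ => φ.size + 1
  | not φ => φ.size + 1

mutual
/-- Negation normal form of a formula. -/
def nnf : Formula 𝒱 Vars → Formula 𝒱 Vars
  | rel R v => rel R v
  | nrel R v => nrel R v
  | equal x y => equal x y
  | nequal x y => nequal x y
  | and φ ψ => and φ.nnf ψ.nnf
  | or φ ψ => or φ.nnf ψ.nnf
  | all x φ => all x φ.nnf
  | ex x φ => ex x φ.nnf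
  | not φ => nnfNeg φ

/-- Negation normal form of the negation of a formula: `nnfNeg φ = nnf (¬φ)`. -/
def nnfNeg : Formula 𝒱 Vars → Formula 𝒱 Vars
  | rel R v => nrel R v
  | nrel R v => rel R v
  | equal x y => nequal x y
  | nequal x y => equal x y
  | and φ ψ => or (nnfNeg φ) (nnfNeg ψ)
  | or φ ψ => and (nnfNeg φ) (nnfNeg ψ)
  | all x φ => ex x (nnfNeg φ)
  | ex x φ => all x (nnfNeg φ)
  | not φ => nnf φ
end

theorem size_nnf_le (φ : Formula 𝒱 Vars) : φ.nnf.size ≤ φ.size ∧ (nnfNeg φ).size ≤ φ.size := by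
  induction φ <;> simp_all [nnf, nnfNeg, size] <;> omega

/-- Free variables of a formula. -/
def FV [DecidableEq Vars] : Formula 𝒱 Vars → Finset Vars
  | rel _ v => Finset.image v Finset.univ
  | nrel _ v => Finset.image v Finset.univ
  | equal x y => {x, y}
  | nequal x y => {x, y}
  | and φ ψ => φ.FV ∪ ψ.FV
  | or φ ψ => φ.FV ∪ ψ.FV
  | all x φ => φ.FV.erase x
  | ex x φ => φ.FV.erase x
  | not φ => φ.FV

end Formula

section Semantics

variable {𝒱 : Vocab} {Vars A K : Type} [DecidableEq Vars] [Fintype A] [DecidableEq A]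
  [CommSemiring K]

/-- The extension of a `K`-interpretation `π : Lit 𝒱 A → K` to first-order formulas,
relative to a valuation `ν : Vars → A`:  `eval π φ ν = π⟦φ⟧ν`. -/
def eval (π : Lit 𝒱 A → K) : Formula 𝒱 Vars → (Vars → A) → K
  | .rel R v, ν => π ⟨true, R, fun i => ν (v i)⟩
  | .nrel R v, ν => π ⟨false, R, fun i => ν (v i)⟩
  | .equal x y, ν => if ν x = ν y then 1 else 0
  | .nequal x y, ν => if ν x ≠ ν y then 1 else 0
  | .and φ ψ, ν => eval π φ ν * eval π ψ ν
  | .or φ ψ, ν => eval π φ ν + eval π ψ ν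
  | .all x φ, ν => ∏ a : A, eval π φ (Function.update ν x a)
  | .ex x φ, ν => ∑ a : A, eval π φ (Function.update ν x a)
  | .not φ, ν => eval π (Formula.nnfNeg φ) ν
termination_by φ _ => φ.size
decreasing_by
  all_goals simp [Formula.size]
  all_goals first
    | omega
    | exact Nat.lt_succ_of_le (Formula.size_nnf_le _).2
    | exact (Formula.size_nnf_le _).2

end Semantics

/-- A `𝒱`-structure with universe `A`: an interpretation of each relation symbol. -/
def Struc (𝒱 : Vocab) (A : Type) := (R : 𝒱.Rel) → (Fin (𝒱.arity R) → A) → Prop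

/-- Standard (Tarski) satisfaction of a literal in a structure. -/
def Struc.SatLit {𝒱 : Vocab} {A : Type} (𝔄 : Struc 𝒱 A) (L : Lit 𝒱 A) : Prop :=
  if L.pos then 𝔄 L.R L.args else ¬ 𝔄 L.R L.args

section Sat

variable {𝒱 : Vocab} {Vars A : Type} [DecidableEq Vars]

/-- Standard (Tarski) satisfaction relation `𝔄 ⊨ φ[ν]`. -/
def Sat (𝔄 : Struc 𝒱 A) : Formula 𝒱 Vars → (Vars → A) → Prop
  | .rel R v, ν => 𝔄 R (fun i => ν (v i))
  | .nrel R v, ν => ¬ 𝔄 R (fun i => ν (v i))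
  | .equal x y, ν => ν x = ν y
  | .nequal x y, ν => ν x ≠ ν y
  | .and φ ψ, ν => Sat 𝔄 φ ν ∧ Sat 𝔄 ψ ν
  | .or φ ψ, ν => Sat 𝔄 φ ν ∨ Sat 𝔄 ψ ν
  | .all x φ, ν => ∀ a : A, Sat 𝔄 φ (Function.update ν x a)
  | .ex x φ, ν => ∃ a : A, Sat 𝔄 φ (Function.update ν x a)
  | .not φ, ν => ¬ Sat 𝔄 φ ν

end Sat

section ModelDefining

variable {𝒱 : Vocab} {A K : Type} [CommSemiring K]

/-- A `K`-interpretation is model-defining if for each fact exactly one of the values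
assigned to it and to its negation is `0`. -/
def ModelDefining (π : Lit 𝒱 A → K) : Prop :=
  ∀ L : Lit 𝒱 A, (π L = 0 ∧ π L.neg ≠ 0) ∨ (π L ≠ 0 ∧ π L.neg = 0)

/-- The structure `𝔄_π` defined by a model-defining interpretation `π`:
it satisfies a literal `L` iff `π L ≠ 0`. -/
def StrucOf (π : Lit 𝒱 A → K) : Struc 𝒱 A := fun R a => π ⟨true, R, a⟩ ≠ 0

end ModelDefining

/-- A commutative semiring is positive if it is `+`-positive and has no divisors of zero. -/
def IsPositive (K : Type) [CommSemiring K] : Prop :=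
  (∀ a b : K, a + b = 0 → a = 0 ∧ b = 0) ∧ ∀ a b : K, a * b = 0 → a = 0 ∨ b = 0


/-!
In a positive semiring, sums and products of nonzero elements are nonzero (products need
`1 ≠ 0`, which a model-defining `π` forces), so by induction on `φ`, carried out simultaneously
for `φ` and `nnfNeg φ` through which `¬φ` is evaluated, every formula true in `𝔄_π` gets a nonzero
value. Conversely, given nonzero `a` and `b`, value every positive fact over the universe `Bool`
by `a` if all its arguments are `true` and by `b` otherwise, and every negative fact by `0`. For
`R` of positive arity, `∀x R(x,…,x)` and `∃x R(x,…,x)` hold in the defined structure and evaluate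
to `a * b` and `a + b`.
-/

open Formula

section PositiveSemiring

variable {K : Type} [CommSemiring K]

theorem IsPositive.sum_ne_zero (hK : IsPositive K) {ι : Type} [DecidableEq ι] {s : Finset ι}
    {f : ι → K} {i : ι} (hi : i ∈ s) (hf : f i ≠ 0) : ∑ j ∈ s, f j ≠ 0 := by
  rw [← Finset.add_sum_erase s f hi]
  exact fun h => hf (hK.1 _ _ h).1

theorem IsPositive.prod_ne_zero [Nontrivial K] (hK : IsPositive K) {ι : Type} {s : Finset ι}
    {f : ι → K} (hf : ∀ i ∈ s, f i ≠ 0) : ∏ i ∈ s, f i ≠ 0 :=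
  have : NoZeroDivisors K := ⟨hK.2 _ _⟩
  Finset.prod_ne_zero_iff.mpr hf

theorem isPositive_of_add_ne_zero_of_mul_ne_zero
    (h : ∀ a b : K, a ≠ 0 → b ≠ 0 → a + b ≠ 0 ∧ a * b ≠ 0) : IsPositive K := by
  refine ⟨fun a b hab => ?_, fun a b hab => ?_⟩
  · by_cases ha : a = 0
    · exact ⟨ha, by simpa [ha] using hab⟩
    · by_cases hb : b = 0
      · exact absurd (by simpa [hb] using hab) ha
      · exact absurd hab (h a b ha hb).1
  · by_contra! hab'
    exact (h a b hab'.1 hab'.2).2 hab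

end PositiveSemiring

section ModelDefining

variable {𝒱 : Vocab} {A K : Type} [CommSemiring K] {π : Lit 𝒱 A → K}

theorem ModelDefining.nontrivial (hπ : ModelDefining π) (L : Lit 𝒱 A) : Nontrivial K := by
  rcases hπ L with ⟨_, h⟩ | ⟨h, _⟩ <;> exact nontrivial_of_ne _ _ h

theorem ModelDefining.neg_ne_zero (hπ : ModelDefining π) {L : Lit 𝒱 A} (h : π L = 0) :
    π L.neg ≠ 0 :=
  ((hπ L).resolve_right fun h' => h'.1 h).2

end ModelDefining

section Soundness

variable {𝒱 : Vocab} {Vars A K : Type} [DecidableEq Vars] [Fintype A] [DecidableEq A]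
  [CommSemiring K]

theorem eval_nnf (π : Lit 𝒱 A → K) (φ : Formula 𝒱 Vars) (ν : Vars → A) :
    eval π φ.nnf ν = eval π φ ν := by
  induction φ generalizing ν with
  | and φ ψ ihφ ihψ => simp only [nnf, eval, ihφ, ihψ]
  | or φ ψ ihφ ihψ => simp only [nnf, eval, ihφ, ihψ]
  | all x φ ih => simp only [nnf, eval, ih]
  | ex x φ ih => simp only [nnf, eval, ih]
  | _ => simp only [nnf, eval]

theorem IsPositive.eval_ne_zero_of_sat [Nontrivial K] (hK : IsPositive K) {π : Lit 𝒱 A → K}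
    (hπ : ModelDefining π) (φ : Formula 𝒱 Vars) (ν : Vars → A) :
    (Sat (StrucOf π) φ ν → eval π φ ν ≠ 0) ∧
      (¬ Sat (StrucOf π) φ ν → eval π φ.nnfNeg ν ≠ 0) := by
  induction φ generalizing ν with
  | rel R v =>
    simp only [Sat, StrucOf, eval, nnfNeg, not_not]
    exact ⟨id, hπ.neg_ne_zero⟩
  | nrel R v =>
    simp only [Sat, StrucOf, eval, nnfNeg, not_not]
    exact ⟨hπ.neg_ne_zero, id⟩
  | equal x y =>
    simp only [Sat, eval, nnfNeg]
    exact ⟨fun h => by simp [h], fun h => by simp [h]⟩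
  | nequal x y =>
    simp only [Sat, eval, nnfNeg]
    exact ⟨fun h => by simp [h], fun h => by simp [not_not.mp h]⟩
  | and φ ψ ihφ ihψ =>
    simp only [Sat, eval, nnfNeg, not_and_or]
    refine ⟨fun ⟨hφ, hψ⟩ h => ?_, ?_⟩
    · rcases hK.2 _ _ h with h | h
      exacts [(ihφ ν).1 hφ h, (ihψ ν).1 hψ h]
    · rintro (hφ | hψ) h
      exacts [(ihφ ν).2 hφ (hK.1 _ _ h).1, (ihψ ν).2 hψ (hK.1 _ _ h).2]
  | or φ ψ ihφ ihψ =>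
    simp only [Sat, eval, nnfNeg, not_or]
    refine ⟨?_, fun ⟨hφ, hψ⟩ h => ?_⟩
    · rintro (hφ | hψ) h
      exacts [(ihφ ν).1 hφ (hK.1 _ _ h).1, (ihψ ν).1 hψ (hK.1 _ _ h).2]
    · rcases hK.2 _ _ h with h | h
      exacts [(ihφ ν).2 hφ h, (ihψ ν).2 hψ h]
  | all x φ ih =>
    simp only [Sat, eval, nnfNeg, not_forall]
    exact ⟨fun h => hK.prod_ne_zero fun a _ => (ih _).1 (h a),
      fun ⟨a, h⟩ => hK.sum_ne_zero (Finset.mem_univ a) ((ih _).2 h)⟩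
  | ex x φ ih =>
    simp only [Sat, eval, nnfNeg, not_exists]
    exact ⟨fun ⟨a, h⟩ => hK.sum_ne_zero (Finset.mem_univ a) ((ih _).1 h),
      fun h => hK.prod_ne_zero fun a _ => (ih _).2 (h a)⟩
  | not φ ih =>
    simp only [Sat, eval, nnfNeg, not_not, eval_nnf]
    exact ⟨(ih ν).2, (ih ν).1⟩

end Soundness

section Converse

variable {𝒱 : Vocab} {K : Type} [CommSemiring K]

def twoValued (a b : K) (L : Lit 𝒱 Bool) : K :=
  if L.pos then (if ∀ i, L.args i = true then a else b) else 0

variable {a b : K}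

theorem twoValued_pos_ne_zero (ha : a ≠ 0) (hb : b ≠ 0) (R : 𝒱.Rel)
    (args : Fin (𝒱.arity R) → Bool) : twoValued a b ⟨true, R, args⟩ ≠ 0 := by
  rw [twoValued, if_pos rfl]
  split_ifs <;> assumption

theorem modelDefining_twoValued (ha : a ≠ 0) (hb : b ≠ 0) :
    ModelDefining (twoValued (𝒱 := 𝒱) a b) := by
  rintro ⟨_ | _, R, args⟩
  · exact Or.inl ⟨if_neg Bool.false_ne_true, twoValued_pos_ne_zero ha hb R args⟩
  · exact Or.inr ⟨twoValued_pos_ne_zero ha hb R args, if_neg Bool.false_ne_true⟩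

theorem twoValued_const {R : 𝒱.Rel} (hR : 0 < 𝒱.arity R) (x : Bool) :
    twoValued a b ⟨true, R, fun _ => x⟩ = if x then a else b := by
  cases x
  · simpa [twoValued] using fun h : Fin (𝒱.arity R) → False => (h ⟨0, hR⟩).elim
  · simp [twoValued]

theorem eval_twoValued_all {R : 𝒱.Rel} (hR : 0 < 𝒱.arity R) (ν : Unit → Bool) :
    eval (twoValued a b) (.all () (.rel R fun _ => ())) ν = a * b := by
  simp [eval, twoValued_const hR]

theorem eval_twoValued_ex {R : 𝒱.Rel} (hR : 0 < 𝒱.arity R) (ν : Unit → Bool) :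
    eval (twoValued a b) (.ex () (.rel R fun _ => ())) ν = a + b := by
  simp [eval, twoValued_const hR]

end Converse

/-- a commutative semiring `K` is positive if and only if for every
finite non-empty universe `A`, every model-defining `K`-interpretation `π` and every
sentence `φ`, `𝔄_π ⊨ φ` implies `π⟦φ⟧ ≠ 0`.  (For the right-to-left direction the
vocabulary is required to contain a relation symbol of positive arity.) -/
theorem isPositive_iff_modelDefining_sound {K : Type} [CommSemiring K]
    (𝒱 : Vocab) (hV : ∃ R : 𝒱.Rel, 0 < 𝒱.arity R) :
    IsPositive K ↔
      ∀ (A : Type) [Fintype A] [DecidableEq A] [Nonempty A] (π : Lit 𝒱 A → K),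
        ModelDefining π →
        ∀ (Vars : Type) [DecidableEq Vars] (φ : Formula 𝒱 Vars), φ.FV = ∅ →
          ∀ ν : Vars → A, Sat (StrucOf π) φ ν → eval π φ ν ≠ 0 := by
  obtain ⟨R, hR⟩ := hV
  constructor
  · intro hK A _ _ _ π hπ Vars _ φ _ ν hsat
    have := hπ.nontrivial ⟨true, R, fun _ => Classical.arbitrary A⟩
    exact (hK.eval_ne_zero_of_sat hπ φ ν).1 hsat
  · intro sound
    refine isPositive_of_add_ne_zero_of_mul_ne_zero fun a b ha hb => ?_
    have sound_twoValued := fun φ hφ =>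
      sound Bool (twoValued a b) (modelDefining_twoValued ha hb) Unit φ hφ (fun _ => true)
    have hsat := twoValued_pos_ne_zero ha hb R
    constructor
    · simpa only [eval_twoValued_ex hR] using
        sound_twoValued (.ex () (.rel R fun _ => ())) (by ext; simp [FV]) ⟨true, hsat _⟩
    · simpa only [eval_twoValued_all hR] using
        sound_twoValued (.all () (.rel R fun _ => ())) (by ext; simp [FV]) fun _ => hsat _
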